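/- Let E be a finite directed graph and let F(E) be its Cohn companion graph. Then the order-unit [Σ_{w∈F(E)⁰} w] of the graph monoid M_{F(E)} has Unbounded Generating Number if and only if E contains a source or E contains a source cycle. -/

import Mathlib

/-!
Additive maps `M_{F(E)} → ℕ` come from vertex weights `w` with `w v = Σ_{s e = v} w (r e)`, and
one that is positive on the order unit `1` forces UGN. A source of `E` leaves an isolated vertex
of `F(E)`, whose indicator is such a weight. For a source cycle `C` the indicator of `C` is one:
every edge into `C` is an edge of `C`, so a vertex emits exactly one edge into `C` if it lies on
`C` and none otherwise.

Conversely, if `E` has neither, applying every defining relation once gives `1 = 1 + X` with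
`X = Σ_e r(e) + Σ_{v sink} v - 1`. Every primed vertex is a sink and so occurs in `X`; going
backwards along incoming edges from a vertex of `E` must reach a vertex with two incoming edges
(a backward path through in-degree-one vertices closes up into a source cycle), which occurs in
`X` as well. So every generator lies below `X`, whence `1 ≤ N • X` for `N` the number of
vertices, and `1 + 1 ≤ 1 + N • X = 1`.
-/

variable {V E : Type}

/-- A cycle in the directed graph with edge set `E`, vertex set `V`, and source/range
maps `s r : E → V`: a nonempty list of edges `e₁ ⋯ eₙ` with `r eᵢ = s eᵢ₊₁`
(indices cyclically, so in particular `r eₙ = s e₁`) whose source vertices are pairwise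
distinct. -/
def IsCycle (s r : E → V) (c : List E) : Prop :=
  ∃ h : 0 < c.length,
    (∀ (i : ℕ) (hi : i < c.length),
        r (c.get ⟨i, hi⟩) = s (c.get ⟨(i + 1) % c.length, Nat.mod_lt _ h⟩)) ∧
    (c.map s).Nodup

/-- The defining relations of the graph monoid `M_E` on the free abelian monoid
`V → ℕ` on the vertices: `v = Σ_{e ∈ s⁻¹(v)} r e` for each regular vertex `v`. -/
def graphRel [Fintype E] [DecidableEq V] (s r : E → V) (x y : V → ℕ) : Prop :=
  ∃ v : V, (∃ e : E, s e = v) ∧ x = Pi.single v 1 ∧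
    y = ∑ e : E, if s e = v then Pi.single (r e) 1 else 0

/-- The graph monoid `M_E`: the quotient of the free abelian monoid on the vertices by
the monoid congruence generated by the relations `v = Σ_{e ∈ s⁻¹(v)} r e`. -/
def graphMonoidMk [Fintype E] [DecidableEq V] (s r : E → V) :
    (V → ℕ) →+ (addConGen (graphRel s r)).Quotient :=
  (addConGen (graphRel s r)).mk'

/-- The vertices of the Cohn companion graph `F(E)`: the vertices of `E` together with a
disjoint copy `v'` of each regular vertex `v` (a vertex emitting at least one edge). -/
abbrev cohnV (s : E → V) : Type := V ⊕ {v : V // ∃ e : E, s e = v}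

/-- The edges of the Cohn companion graph `F(E)`: the edges of `E` together with a new
edge `e'` for each edge `e` whose range is a regular vertex. -/
abbrev cohnE (s r : E → V) : Type := E ⊕ {e : E // ∃ f : E, s f = r e}

/-- The source map of `F(E)`: `s(e) = s_E(e)` and `s(e') = s_E(e)`. -/
def cohnS (s r : E → V) : cohnE s r → cohnV s :=
  Sum.elim (fun e => Sum.inl (s e)) fun e => Sum.inl (s e.1)

/-- The range map of `F(E)`: `r(e) = r_E(e)` and `r(e') = (r_E(e))'`. -/
def cohnR (s r : E → V) : cohnE s r → cohnV s :=
  Sum.elim (fun e => Sum.inl (r e)) fun e => Sum.inr ⟨r e.1, e.2⟩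

open Finset Function Relation

/-- Unbounded Generating Number, with `x ≤ y` read algebraically as `∃ z, x + z = y`. -/
def HasUGN {M : Type*} [AddCommMonoid M] (d : M) : Prop :=
  ∀ n n' : ℕ, 0 < n → 0 < n' → (∃ z, n • d + z = n' • d) → n ≤ n'

theorem HasUGN.of_addMonoidHom {M : Type*} [AddCommMonoid M] {d : M} (f : M →+ ℕ)
    (hd : 0 < f d) : HasUGN d := by
  rintro n n' - - ⟨z, hz⟩
  have hle : n * f d ≤ n' * f d := by
    have := congrArg f hz
    simp only [map_add, map_nsmul, smul_eq_mul] at this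
    omega
  exact Nat.le_of_mul_le_mul_right hle hd

theorem not_hasUGN_of_add_add_eq {M : Type*} [AddCommMonoid M] {d : M}
    (h : ∃ z, d + d + z = d) : ¬HasUGN d := fun hd => by
  have := hd 2 1 two_pos one_pos (by simpa only [two_nsmul, one_nsmul] using h)
  omega

theorem exists_sum_add_eq_card_nsmul {M ι : Type*} [AddCommMonoid M] [Fintype ι]
    {f : ι → M} {x : M} (h : ∀ i, ∃ z, f i + z = x) :
    ∃ z, ∑ i, f i + z = Fintype.card ι • x := by
  choose z hz using h
  refine ⟨∑ i, z i, ?_⟩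
  rw [← sum_add_distrib, sum_congr rfl fun i _ => hz i, sum_const, card_univ]

theorem sum_single_one {ι : Type*} [Fintype ι] [DecidableEq ι] :
    ∑ i : ι, Pi.single i 1 = (1 : ι → ℕ) :=
  univ_sum_single 1

def graphAdj (s r : E → V) (a b : V) : Prop :=
  ∃ e, s e = a ∧ r e = b

section GraphMonoid

variable [Fintype E] [DecidableEq V] (s r : E → V)

theorem graphMonoidMk_single_eq_sum {v : V} (hv : ∃ e, s e = v) :
    graphMonoidMk s r (Pi.single v 1) =
      graphMonoidMk s r (∑ e, if s e = v then Pi.single (r e) 1 else 0) :=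
  (AddCon.eq _).2 (AddConGen.Rel.of _ _ ⟨v, hv, rfl, rfl⟩)

theorem exists_graphMonoidMk_add_eq_of_le {x y : V → ℕ} (h : x ≤ y) :
    ∃ z, graphMonoidMk s r x + z = graphMonoidMk s r y :=
  ⟨graphMonoidMk s r (y - x), by rw [← map_add, add_tsub_cancel_of_le h]⟩

theorem exists_graphMonoidMk_range_add_eq_source (e : E) :
    ∃ z, graphMonoidMk s r (Pi.single (r e) 1) + z = graphMonoidMk s r (Pi.single (s e) 1) := by
  rw [graphMonoidMk_single_eq_sum s r ⟨e, rfl⟩]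
  refine exists_graphMonoidMk_add_eq_of_le s r ?_
  calc Pi.single (r e) 1 = if s e = s e then Pi.single (r e) 1 else 0 := (if_pos rfl).symm
    _ ≤ _ := single_le_sum (f := fun e' => if s e' = s e then Pi.single (r e') 1 else 0)
          (fun _ _ => zero_le) (mem_univ e)

theorem exists_graphMonoidMk_add_eq_of_reflTransGen {a b : V}
    (h : ReflTransGen (graphAdj s r) a b) :
    ∃ z, graphMonoidMk s r (Pi.single b 1) + z = graphMonoidMk s r (Pi.single a 1) := by
  induction h with
  | refl => exact ⟨0, add_zero _⟩
  | tail _ hbc ih =>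
    obtain ⟨e, rfl, rfl⟩ := hbc
    obtain ⟨z₁, hz₁⟩ := exists_graphMonoidMk_range_add_eq_source s r e
    obtain ⟨z₂, hz₂⟩ := ih
    exact ⟨z₁ + z₂, by rw [← add_assoc, hz₁, hz₂]⟩

/-- The weights `w` for which `x ↦ Σ_v x v * w v` respects the defining relations. -/
def IsInvariantWeight (w : V → ℕ) : Prop :=
  ∀ v, (∃ e, s e = v) → w v = ∑ e, if s e = v then w (r e) else 0

theorem isInvariantWeight_single {x : V} (hs : ¬∃ e, s e = x) (hr : ¬∃ e, r e = x) :
    IsInvariantWeight s r (Pi.single x 1) := by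
  rintro v ⟨e₀, rfl⟩
  rw [Pi.single_eq_of_ne fun h => hs ⟨e₀, h⟩]
  refine (sum_eq_zero fun e _ => ?_).symm
  rw [Pi.single_eq_of_ne fun h => hr ⟨e, h⟩, ite_self]

/-- The vector `Σ_e r(e) + Σ_{v sink} v`, obtained from `Σ_v v` by applying every defining
relation once. -/
def unitExpansion (v : V) : ℕ :=
  #{e | r e = v} + if ∃ e, s e = v then 0 else 1

variable [Fintype V]

theorem graphMonoidMk_one_eq_unitExpansion :
    graphMonoidMk s r 1 = graphMonoidMk s r (unitExpansion s r) := by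
  have hvertex : ∀ v, graphMonoidMk s r (Pi.single v 1) = graphMonoidMk s r
      ((∑ e, if s e = v then Pi.single (r e) 1 else 0) +
        Pi.single v (if ∃ e, s e = v then 0 else 1)) := by
    intro v
    by_cases hv : ∃ e, s e = v
    · rw [if_pos hv, Pi.single_zero, add_zero, graphMonoidMk_single_eq_sum s r hv]
    · rw [if_neg hv, sum_eq_zero fun e _ => if_neg fun he => hv ⟨e, he⟩, zero_add]
  have hsum : ∑ v, ((∑ e, if s e = v then Pi.single (r e) 1 else 0) +
      Pi.single v (if ∃ e, s e = v then 0 else 1)) = unitExpansion s r := by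
    rw [sum_add_distrib, sum_comm, univ_sum_single (fun v => if ∃ e, s e = v then 0 else 1)]
    ext v
    simp [unitExpansion, Pi.single_apply, sum_boole, eq_comm (a := v)]
  rw [← sum_single_one, map_sum, sum_congr rfl fun v _ => hvertex v, ← map_sum, hsum]

theorem graphMonoidMk_one_add_unitExpansion_sub_one (hsrc : ∀ v, ∃ e, r e = v) :
    graphMonoidMk s r 1 + graphMonoidMk s r (unitExpansion s r - 1) = graphMonoidMk s r 1 := by
  have hle : 1 ≤ unitExpansion s r := fun v => by
    obtain ⟨e, he⟩ := hsrc v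
    have : 0 < #{e | r e = v} := card_pos.2 ⟨e, by simp [he]⟩
    simp only [unitExpansion, Pi.one_apply]
    omega
  rw [← map_add, add_tsub_cancel_of_le hle, graphMonoidMk_one_eq_unitExpansion]

theorem exists_graphMonoidMk_one_add_one_add_eq (hsrc : ∀ v, ∃ e, r e = v)
    (hhub : ∀ v, ∃ w, 2 ≤ unitExpansion s r w ∧ ReflTransGen (graphAdj s r) w v) :
    ∃ z, graphMonoidMk s r 1 + graphMonoidMk s r 1 + z = graphMonoidMk s r 1 := by
  set X := unitExpansion s r - 1
  have habsorb (k : ℕ) :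
      graphMonoidMk s r 1 + k • graphMonoidMk s r X = graphMonoidMk s r 1 := by
    induction k with
    | zero => rw [zero_nsmul, add_zero]
    | succ k ih =>
      rw [succ_nsmul, ← add_assoc, ih, graphMonoidMk_one_add_unitExpansion_sub_one s r hsrc]
  have hgen : ∀ v, ∃ z, graphMonoidMk s r (Pi.single v 1) + z = graphMonoidMk s r X := by
    intro v
    obtain ⟨w, hw, hwv⟩ := hhub v
    have hle : Pi.single w 1 ≤ X := fun u => by
      rcases eq_or_ne u w with rfl | hu
      · simp only [Pi.single_eq_same, X, Pi.sub_apply, Pi.one_apply]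
        omega
      · simp [Pi.single_eq_of_ne hu]
    obtain ⟨z₁, hz₁⟩ := exists_graphMonoidMk_add_eq_of_reflTransGen s r hwv
    obtain ⟨z₂, hz₂⟩ := exists_graphMonoidMk_add_eq_of_le s r hle
    exact ⟨z₁ + z₂, by rw [← add_assoc, hz₁, hz₂]⟩
  obtain ⟨z, hz⟩ := exists_sum_add_eq_card_nsmul hgen
  rw [← map_sum, sum_single_one] at hz
  exact ⟨z, by rw [add_assoc, hz, habsorb]⟩

theorem hasUGN_of_isInvariantWeight {w : V → ℕ} (hw : IsInvariantWeight s r w)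
    (hne : w ≠ 0) : HasUGN (graphMonoidMk s r 1) := by
  let f : (V → ℕ) →+ ℕ :=
    { toFun := (· ⬝ᵥ w)
      map_zero' := zero_dotProduct w
      map_add' := fun x y => add_dotProduct x y w }
  have hker : addConGen (graphRel s r) ≤ AddCon.ker f := AddCon.addConGen_le.2 <| by
    rintro _ _ ⟨v, hv, rfl, rfl⟩
    simp only [AddCon.ker_rel, f, AddMonoidHom.coe_mk, ZeroHom.coe_mk, single_dotProduct, one_mul,
      sum_dotProduct, apply_ite (· ⬝ᵥ w), zero_dotProduct]
    exact hw v hv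
  refine HasUGN.of_addMonoidHom ((addConGen (graphRel s r)).lift f hker) ?_
  rw [graphMonoidMk, AddCon.lift_mk']
  simp only [f, AddMonoidHom.coe_mk, ZeroHom.coe_mk, one_dotProduct]
  exact pos_iff_ne_zero.2 fun h => hne (funext fun v => sum_eq_zero_iff.1 h v (mem_univ v))

end GraphMonoid

theorem exists_iterate_mem_periodicPts {α : Type*} [Finite α] (f : α → α) (x : α) :
    ∃ m, f^[m] x ∈ periodicPts f := by
  obtain ⟨i, j, hne, hij⟩ := Finite.exists_ne_map_eq_of_infinite fun n => f^[n] x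
  wlog hlt : i < j generalizing i j
  · exact this j i hne.symm hij.symm (by omega)
  refine ⟨i, mk_mem_periodicPts (n := j - i) (by omega) ?_⟩
  rw [IsPeriodicPt, IsFixedPt, ← iterate_add_apply, Nat.sub_add_cancel hlt.le]
  exact hij.symm

section Cycles

variable {s r : E → V}

theorem IsCycle.map_range_eq_rotate {c : List E} (hc : IsCycle s r c) :
    c.map r = (c.map s).rotate 1 := by
  obtain ⟨hpos, hnext, -⟩ := hc
  refine List.ext_getElem (by simp) fun i hi _ => ?_
  simp only [List.getElem_rotate, List.getElem_map, List.length_map]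
  exact hnext i (by simpa using hi)

theorem IsCycle.exists_mem_range_eq {c : List E} (hc : IsCycle s r c) {v : V}
    (hv : v ∈ c.map s) : ∃ e ∈ c, r e = v := by
  rwa [← List.mem_map, hc.map_range_eq_rotate, List.mem_rotate]

/-- A periodic orbit of `s ∘ ch`, where `ch v` is an edge ending at `v`, traced backwards. -/
theorem exists_isCycle_of_mem_periodicPts (ch : V → E) (hch : ∀ v, r (ch v) = v) {x : V}
    (hx : x ∈ periodicPts (s ∘ ch)) :
    ∃ c, IsCycle s r c ∧ ∀ v ∈ c.map s, ∃ k, (s ∘ ch)^[k] x = v := by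
  set f := s ∘ ch
  set p := minimalPeriod f x
  have hp : 0 < p := minimalPeriod_pos_of_mem_periodicPts hx
  have hs : ∀ k, s (ch (f^[k] x)) = f^[k + 1] x := fun k => (iterate_succ_apply' f k x).symm
  have hback : ∀ k, f^[p - 1] (f^[k + 1] x) = f^[k] x := fun k => by
    rw [← iterate_add_apply, show p - 1 + (k + 1) = k + p by omega, iterate_add_minimalPeriod_eq]
  refine ⟨List.ofFn fun k : Fin p => ch (f^[p - 1 - k] x), ⟨by simpa using hp, ?_, ?_⟩, ?_⟩
  · intro i hi
    simp only [List.length_ofFn, List.get_eq_getElem, List.getElem_ofFn, hch, hs] at hi ⊢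
    rcases Nat.lt_or_ge (i + 1) p with h | h
    · rw [Nat.mod_eq_of_lt h]
      congr 1
      omega
    · rw [show i + 1 = p by omega, Nat.mod_self, Nat.sub_zero, Nat.sub_add_cancel hp,
        iterate_minimalPeriod, show p - 1 - i = 0 by omega, iterate_zero_apply]
  · rw [List.map_ofFn, List.nodup_ofFn]
    intro i j hij
    simp only [comp_apply, hs] at hij
    have := congrArg (f^[p - 1]) hij
    rw [hback, hback, iterate_eq_iterate_iff_of_lt_minimalPeriod (by omega) (by omega)] at this
    exact Fin.ext (by omega)
  · intro v hv
    obtain ⟨k, rfl⟩ := List.mem_ofFn.1 (by simpa only [List.map_ofFn] using hv)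
    exact ⟨_, (hs _).symm⟩

variable [Fintype E] [DecidableEq V]

def IsSourceCycle (s r : E → V) (c : List E) : Prop :=
  IsCycle s r c ∧ ∀ v ∈ c.map s, #{e | r e = v} = 1

theorem IsSourceCycle.mem_iff {c : List E} (hc : IsSourceCycle s r c) (e : E) :
    e ∈ c ↔ r e ∈ c.map s := by
  refine ⟨fun he => ?_, fun he => ?_⟩
  · rw [← List.mem_rotate (n := 1), ← hc.1.map_range_eq_rotate]
    exact List.mem_map_of_mem he
  · obtain ⟨e', he', hr⟩ := hc.1.exists_mem_range_eq he
    have hone := (hc.2 _ he).le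
    rw [card_le_one] at hone
    rwa [hone e (by simp) e' (by simp [hr])]

theorem IsSourceCycle.card_filter_source_eq {c : List E} (hc : IsSourceCycle s r c) (u : V) :
    #{e | s e = u ∧ r e ∈ c.map s} = if u ∈ c.map s then 1 else 0 := by
  classical
  rw [filter_congr fun e _ => by rw [← hc.mem_iff]]
  split_ifs with hu
  · obtain ⟨e₀, he₀, rfl⟩ := List.mem_map.1 hu
    refine card_eq_one.2 ⟨e₀, eq_singleton_iff_unique_mem.2 ⟨by simp [he₀], ?_⟩⟩
    intro e he
    simp only [mem_filter, mem_univ, true_and] at he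
    exact List.inj_on_of_nodup_map hc.1.2.2 he.2 he₀ he.1
  · refine card_eq_zero.2 (filter_eq_empty_iff.2 fun e _ he => hu ?_)
    exact he.1 ▸ List.mem_map_of_mem he.2

theorem exists_reflTransGen_one_lt_card [Finite V] (hsrc : ∀ v, ∃ e, r e = v)
    (hcyc : ¬∃ c, IsSourceCycle s r c) (u : V) :
    ∃ w, 1 < #{e | r e = w} ∧ ReflTransGen (graphAdj s r) w u := by
  by_contra! hnone
  choose ch hch using hsrc
  set f := s ∘ ch
  have hreach : ∀ n, ReflTransGen (graphAdj s r) (f^[n] u) u := fun n => by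
    induction n with
    | zero => exact .refl
    | succ n ih => rw [iterate_succ_apply']; exact .head ⟨ch _, rfl, hch _⟩ ih
  obtain ⟨m, hm⟩ := exists_iterate_mem_periodicPts f u
  obtain ⟨c, hc, hcv⟩ := exists_isCycle_of_mem_periodicPts ch hch hm
  refine hcyc ⟨c, hc, fun v hv => ?_⟩
  obtain ⟨k, rfl⟩ := hcv v hv
  rw [← iterate_add_apply]
  refine le_antisymm (not_lt.1 fun h => hnone _ h (hreach _)) ?_
  exact card_pos.2 ⟨ch (f^[k + m] u), by simp [f, hch]⟩

end Cycles

section Cohn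

variable {s r : E → V}

theorem cohnS_ne_inr (e : cohnE s r) (v : {v : V // ∃ e : E, s e = v}) :
    cohnS s r e ≠ Sum.inr v := by
  rcases e with e | e <;> simp [cohnS]

theorem exists_cohnS_eq_inl (e : cohnE s r) : ∃ u, cohnS s r e = Sum.inl u := by
  rcases e with e | e <;> exact ⟨_, rfl⟩

theorem exists_cohnR_eq (hsrc : ∀ v, ∃ e, r e = v) (x : cohnV s) : ∃ e, cohnR s r e = x := by
  rcases x with v | ⟨v, hv⟩
  · obtain ⟨e, rfl⟩ := hsrc v
    exact ⟨Sum.inl e, rfl⟩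
  · obtain ⟨e, rfl⟩ := hsrc v
    exact ⟨Sum.inr ⟨e, hv⟩, rfl⟩

/-- A source `v₀` of `E` leaves an isolated vertex in `F(E)`: `v₀'` if `v₀` is regular, `v₀`
itself otherwise. -/
theorem exists_cohn_isolated {v₀ : V} (hv₀ : ¬∃ e, r e = v₀) :
    ∃ x : cohnV s, (¬∃ e, cohnS s r e = x) ∧ ¬∃ e, cohnR s r e = x := by
  by_cases hreg : ∃ e, s e = v₀
  · refine ⟨Sum.inr ⟨v₀, hreg⟩, fun ⟨e, he⟩ => cohnS_ne_inr e _ he, ?_⟩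
    rintro ⟨e | e, he⟩ <;> simp only [cohnR, Sum.elim_inl, Sum.elim_inr, reduceCtorEq,
      Sum.inr.injEq, Subtype.mk.injEq] at he
    exact hv₀ ⟨e, he⟩
  · refine ⟨Sum.inl v₀, ?_, ?_⟩ <;> rintro ⟨e | e, he⟩ <;>
      simp only [cohnS, cohnR, Sum.elim_inl, Sum.elim_inr, reduceCtorEq, Sum.inl.injEq] at he
    exacts [hreg ⟨e, he⟩, hreg ⟨e.1, he⟩, hv₀ ⟨e, he⟩]

variable [Fintype E] [DecidableEq V]

theorem isInvariantWeight_cohn_of_isSourceCycle {c : List E} (hc : IsSourceCycle s r c) :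
    IsInvariantWeight (cohnS s r) (cohnR s r)
      (Sum.elim (fun u => if u ∈ c.map s then 1 else 0) 0) := by
  rintro _ ⟨e₀, rfl⟩
  obtain ⟨u, hu⟩ := exists_cohnS_eq_inl e₀
  rw [hu, Fintype.sum_sum_type]
  simp only [cohnS, cohnR, Sum.elim_inl, Sum.elim_inr, Sum.inl.injEq, Pi.zero_apply, ite_self,
    sum_const_zero, add_zero, ← ite_and, sum_boole, Nat.cast_id]
  exact (hc.card_filter_source_eq u).symm

theorem exists_reflTransGen_two_le_unitExpansion_cohn [Finite V] (hsrc : ∀ v, ∃ e, r e = v)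
    (hcyc : ¬∃ c, IsSourceCycle s r c) (x : cohnV s) :
    ∃ w, 2 ≤ unitExpansion (cohnS s r) (cohnR s r) w ∧
      ReflTransGen (graphAdj (cohnS s r) (cohnR s r)) w x := by
  rcases x with u | v
  · obtain ⟨w, hw, hwu⟩ := exists_reflTransGen_one_lt_card hsrc hcyc u
    have hcard : #{e | r e = w} ≤ #{e | cohnR s r e = Sum.inl w} := by
      refine card_le_card_of_injOn Sum.inl (fun e he => ?_) Sum.inl_injective.injOn
      simp only [coe_filter, Set.mem_ofPred_eq, mem_univ, true_and] at he ⊢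
      exact congrArg Sum.inl he
    refine ⟨Sum.inl w, by rw [unitExpansion]; omega, ?_⟩
    exact ReflTransGen.lift Sum.inl (fun a b ⟨e, hs, hr⟩ =>
      ⟨Sum.inl e, congrArg Sum.inl hs, congrArg Sum.inl hr⟩) w u hwu
  · obtain ⟨e, he⟩ := exists_cohnR_eq hsrc (Sum.inr v)
    have hpos : 0 < #{e | cohnR s r e = Sum.inr v} := card_pos.2 ⟨e, by simp [he]⟩
    have hsink : ¬∃ e, cohnS s r e = Sum.inr v := fun ⟨e, he⟩ => cohnS_ne_inr e v he
    refine ⟨Sum.inr v, ?_, .refl⟩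
    rw [unitExpansion, if_neg hsink]
    omega

variable [Fintype V]

theorem hasUGN_cohn_of_source {v₀ : V} (hv₀ : ¬∃ e, r e = v₀) :
    HasUGN (graphMonoidMk (cohnS s r) (cohnR s r) 1) := by
  obtain ⟨x, hxs, hxr⟩ := exists_cohn_isolated hv₀
  exact hasUGN_of_isInvariantWeight _ _ (isInvariantWeight_single _ _ hxs hxr)
    (Pi.single_ne_zero_iff.2 one_ne_zero)

theorem hasUGN_cohn_of_isSourceCycle {c : List E} (hc : IsSourceCycle s r c) :
    HasUGN (graphMonoidMk (cohnS s r) (cohnR s r) 1) := by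
  refine hasUGN_of_isInvariantWeight _ _ (isInvariantWeight_cohn_of_isSourceCycle hc) ?_
  obtain ⟨e, he⟩ := List.exists_mem_of_length_pos hc.1.1
  refine Function.ne_iff.2 ⟨Sum.inl (s e), ?_⟩
  simpa using ⟨e, he, rfl⟩

theorem not_hasUGN_cohn (hsrc : ∀ v, ∃ e, r e = v) (hcyc : ¬∃ c, IsSourceCycle s r c) :
    ¬HasUGN (graphMonoidMk (cohnS s r) (cohnR s r) 1) :=
  not_hasUGN_of_add_add_eq <| exists_graphMonoidMk_one_add_one_add_eq _ _
    (exists_cohnR_eq hsrc) (exists_reflTransGen_two_le_unitExpansion_cohn hsrc hcyc)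

end Cohn

theorem stmt_14_general [Fintype V] [Fintype E] [DecidableEq V]
    (s r : E → V) :
    ((∀ n n' : ℕ, 0 < n → 0 < n' →
        (∃ z, n • graphMonoidMk (cohnS s r) (cohnR s r)
              (∑ w : cohnV s, Pi.single w 1) + z =
            n' • graphMonoidMk (cohnS s r) (cohnR s r)
              (∑ w : cohnV s, Pi.single w 1)) →
          n ≤ n') ↔
      ((∃ v : V, ¬ ∃ e : E, r e = v) ∨
        ∃ c : List E, IsCycle s r c ∧
          ∀ v ∈ c.map s, (Finset.univ.filter fun e => r e = v).card = 1)) := by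
  rw [sum_single_one]
  refine ⟨fun hugn => ?_, ?_⟩
  · by_contra h
    rw [not_or, not_exists] at h
    exact not_hasUGN_cohn (fun v => not_not.1 (h.1 v)) h.2 hugn
  · rintro (⟨v₀, hv₀⟩ | ⟨c, hc⟩)
    · exact hasUGN_cohn_of_source hv₀
    · exact hasUGN_cohn_of_isSourceCycle hc

/-- Let `E` be a finite directed graph and `F(E)` its Cohn companion
graph.  The order-unit `[Σ_{w ∈ F(E)⁰} w]` of the graph monoid `M_{F(E)}` has Unbounded
Generating Number (for positive `n, n'`, `n • d ≤ n' • d → n ≤ n'`, where `x ≤ y` iff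
`∃ z, x + z = y`) if and only if `E` contains a source (a vertex `v` with
`r⁻¹(v) = ∅`) or `E` contains a source cycle (a cycle `c` with `|r⁻¹(v)| = 1` for all
vertices `v` of `c`). -/
theorem stmt_14 [Fintype V] [Fintype E] [DecidableEq V] [DecidableEq E]
    (s r : E → V) :
    ((∀ n n' : ℕ, 0 < n → 0 < n' →
        (∃ z, n • graphMonoidMk (cohnS s r) (cohnR s r)
              (∑ w : cohnV s, Pi.single w 1) + z =
            n' • graphMonoidMk (cohnS s r) (cohnR s r)
              (∑ w : cohnV s, Pi.single w 1)) →
          n ≤ n') ↔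
      ((∃ v : V, ¬ ∃ e : E, r e = v) ∨
        ∃ c : List E, IsCycle s r c ∧
          ∀ v ∈ c.map s, (Finset.univ.filter fun e => r e = v).card = 1)) :=
  stmt_14_general s r
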